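/- Let F be a homogeneous form of degree d over ℂ that is divisible by a linear form. Then either F is not a direct sum, or there exist linearly independent linear forms x and y such that F = x^d − y^d. -/

import Mathlib

/-!
Apolarity setup.  `S = ℂ[x_1,…,x_n]` and its dual ring `T = ℂ[α_1,…,α_n]` are both
realized as `MvPolynomial (Fin n) ℂ`; the apolarity action `Θ ⌟ F` (`contract Θ F`)
lets `α_i` act as the partial differentiation operator `∂/∂x_i`.
-/

open MvPolynomial

noncomputable section Apolarity

/-- Partial derivatives on `ℂ[x_1,…,x_n]` commute. -/
lemma pderiv_pderiv_comm (n : ℕ) (i j : Fin n) (f : MvPolynomial (Fin n) ℂ) :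
    pderiv i (pderiv j f) = pderiv j (pderiv i f) := by
  induction f using MvPolynomial.induction_on with
  | C a => simp
  | add p q hp hq => simp [hp, hq]
  | mul_X p k hp =>
    rcases eq_or_ne i k with rfl | hik
    · rcases eq_or_ne j i with rfl | hjk
      · rfl
      · simp only [pderiv_mul, pderiv_X_self, pderiv_X_of_ne hjk, pderiv_X_of_ne hjk.symm,
          map_add, map_zero, map_one, Derivation.map_one_eq_zero, mul_one, mul_zero,
          add_zero, zero_add, hp]
    · rcases eq_or_ne j k with rfl | hjk
      · simp only [pderiv_mul, pderiv_X_self, pderiv_X_of_ne hik, pderiv_X_of_ne hik.symm,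
          map_add, map_zero, map_one, Derivation.map_one_eq_zero, mul_one, mul_zero,
          add_zero, zero_add, hp]
      · simp only [pderiv_mul, pderiv_X_of_ne hik.symm, pderiv_X_of_ne hjk.symm, map_add,
          map_zero, mul_zero, add_zero, zero_add, hp]

variable (n : ℕ)

/-- The endomorphism `∂/∂x_i` of `S = ℂ[x_1,…,x_n]`. -/
def derOp (i : Fin n) : Module.End ℂ (MvPolynomial (Fin n) ℂ) :=
  (pderiv i).toLinearMap

lemma derOp_commute (i j : Fin n) : Commute (derOp n i) (derOp n j) :=
  LinearMap.ext fun f => pderiv_pderiv_comm n i j f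

/-- The commuting product of the operators `(∂/∂x_i)^(m i)`. -/
def piDiffHom : (Fin n → Multiplicative ℕ) →* Module.End ℂ (MvPolynomial (Fin n) ℂ) :=
  MonoidHom.noncommPiCoprod (fun i : Fin n => powersHom _ (derOp n i))
    (fun i j _ x y => ((derOp_commute n i j).pow_pow x y))

/-- The differential operator `∏ i, (∂/∂x_i)^(m i)` attached to an exponent vector `m`. -/
def diffMonoidHom : Multiplicative (Fin n →₀ ℕ) →* Module.End ℂ (MvPolynomial (Fin n) ℂ) :=
  (piDiffHom n).comp
    (AddMonoidHom.toMultiplicative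
      (Finsupp.coeFnAddHom : (Fin n →₀ ℕ) →+ (Fin n → ℕ)))

/-- The apolarity action of the dual ring `T = ℂ[α_1,…,α_n]` on `S = ℂ[x_1,…,x_n]`, as an
algebra homomorphism to differential operators: `α_i` acts as `∂/∂x_i`. -/
def apolarAlgHom :
    MvPolynomial (Fin n) ℂ →ₐ[ℂ] Module.End ℂ (MvPolynomial (Fin n) ℂ) :=
  AddMonoidAlgebra.lift ℂ _ (Fin n →₀ ℕ) (diffMonoidHom n)

variable {n}

/-- The apolarity action `Θ ⌟ F`: apply to `F` the differential operator obtained from `Θ`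
by substituting `∂/∂x_i` for the `i`-th (dual) variable. -/
def contract (Θ F : MvPolynomial (Fin n) ℂ) : MvPolynomial (Fin n) ℂ :=
  apolarAlgHom n Θ F

lemma apolarAlgHom_X (i : Fin n) : apolarAlgHom n (X i) = derOp n i := by
  classical
  have hX : (X i : MvPolynomial (Fin n) ℂ)
      = AddMonoidAlgebra.single (Finsupp.single i 1) (1 : ℂ) := rfl
  rw [hX]
  rw [show apolarAlgHom n (AddMonoidAlgebra.single (Finsupp.single i 1) (1:ℂ))
      = (1:ℂ) • diffMonoidHom n (Multiplicative.ofAdd (Finsupp.single i 1)) from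
    AddMonoidAlgebra.lift_single _ _ _]
  rw [one_smul]
  change piDiffHom n ((AddMonoidHom.toMultiplicative
      (Finsupp.coeFnAddHom : (Fin n →₀ ℕ) →+ (Fin n → ℕ)))
      (Multiplicative.ofAdd (Finsupp.single i 1))) = derOp n i
  have harg : (AddMonoidHom.toMultiplicative
        (Finsupp.coeFnAddHom : (Fin n →₀ ℕ) →+ (Fin n → ℕ)))
        (Multiplicative.ofAdd (Finsupp.single i 1))
      = Pi.mulSingle (M := fun _ : Fin n => Multiplicative ℕ) i (Multiplicative.ofAdd 1) := by
    funext j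
    rcases eq_or_ne j i with rfl | hj
    · show Multiplicative.ofAdd ((Finsupp.single j 1 : Fin n →₀ ℕ) j)
        = Pi.mulSingle (M := fun _ : Fin n => Multiplicative ℕ) j (Multiplicative.ofAdd 1) j
      rw [Finsupp.single_eq_same, Pi.mulSingle_eq_same]
    · show Multiplicative.ofAdd ((Finsupp.single i 1 : Fin n →₀ ℕ) j)
        = Pi.mulSingle (M := fun _ : Fin n => Multiplicative ℕ) i (Multiplicative.ofAdd 1) j
      rw [Finsupp.single_eq_of_ne hj, Pi.mulSingle_eq_of_ne hj]
      exact ofAdd_zero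
  refine (congrArg (piDiffHom n) harg).trans ?_
  refine (MonoidHom.noncommPiCoprod_mulSingle
    (ϕ := fun i : Fin n => powersHom _ (derOp n i))
    (hcomm := fun i j _ x y => ((derOp_commute n i j).pow_pow x y))
    i (Multiplicative.ofAdd 1)).trans ?_
  rfl

/-- Sanity check: the dual variable `α_i` acts on `F` as `∂F/∂x_i`. -/
@[simp] lemma contract_X (i : Fin n) (F : MvPolynomial (Fin n) ℂ) :
    contract (X i) F = pderiv i F := by
  rw [contract, apolarAlgHom_X]; rfl

/-- The apolar (annihilator) ideal `F^⊥ = {Θ ∈ T : Θ ⌟ F = 0}` of a polynomial `F`. -/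
def apolarIdeal (F : MvPolynomial (Fin n) ℂ) : Ideal (MvPolynomial (Fin n) ℂ) where
  carrier := {Θ | contract Θ F = 0}
  zero_mem' := by simp [contract]
  add_mem' := by
    intro a b ha hb
    simp only [Set.mem_setOf_eq, contract, map_add, LinearMap.add_apply] at *
    rw [ha, hb, add_zero]
  smul_mem' := by
    intro c x hx
    simp only [Set.mem_setOf_eq, smul_eq_mul, contract, map_mul, Module.End.mul_apply] at *
    rw [hx, map_zero]

@[simp] lemma mem_apolarIdeal {Θ F : MvPolynomial (Fin n) ℂ} :
    Θ ∈ apolarIdeal F ↔ contract Θ F = 0 := Iff.rfl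

variable (n)

/-- The irrelevant maximal ideal `m = ⟨α_1,…,α_n⟩` of `T`. -/
def irrIdeal : Ideal (MvPolynomial (Fin n) ℂ) :=
  Ideal.span (Set.range X)

variable {n}

/-- The homogeneous ideal `I` has a minimal generator of degree `k`, i.e. `(I/mI)_k ≠ 0`:
there is a homogeneous element of `I` of degree `k` not belonging to `m * I`. -/
def HasMinGenOfDegree (I : Ideal (MvPolynomial (Fin n) ℂ)) (k : ℕ) : Prop :=
  ∃ Θ, Θ ∈ I ∧ Θ.IsHomogeneous k ∧ Θ ∉ irrIdeal n * I

/-- The homogeneous ideal `I` has at least `r` minimal generators of degree `k`, i.e.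
`dim_ℂ (I/mI)_k ≥ r`: there are `r` homogeneous degree-`k` elements of `I` that are
linearly independent modulo `m * I`. -/
def MinGensAtLeast (I : Ideal (MvPolynomial (Fin n) ℂ)) (k r : ℕ) : Prop :=
  ∃ Θ : Fin r → MvPolynomial (Fin n) ℂ,
    (∀ i, Θ i ∈ I ∧ (Θ i).IsHomogeneous k) ∧
    ∀ c : Fin r → ℂ, (∑ i, c i • Θ i) ∈ irrIdeal n * I → ∀ i, c i = 0

/-- `F` is an `s`-fold direct sum of degree `d`: `F = F_1 + ⋯ + F_s` where the `F_i` are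
nonzero degree-`d` forms in independent subspaces `V_i` of the space of linear forms with
`V = V_1 ⊕ ⋯ ⊕ V_s` (i.e. in disjoint sets of variables, up to linear change of variables;
`F_i ∈ S^d V_i` is expressed as membership in the subalgebra generated by `V_i`). -/
def IsSFoldDirectSum (F : MvPolynomial (Fin n) ℂ) (d s : ℕ) : Prop :=
  ∃ (V : Fin s → Submodule ℂ (MvPolynomial (Fin n) ℂ))
    (G : Fin s → MvPolynomial (Fin n) ℂ),
    (∀ i, V i ≤ homogeneousSubmodule (Fin n) ℂ 1) ∧
    iSupIndep V ∧
    (⨆ i, V i) = homogeneousSubmodule (Fin n) ℂ 1 ∧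
    (∀ i, G i ≠ 0 ∧ (G i).IsHomogeneous d ∧ G i ∈ Algebra.adjoin ℂ (V i : Set _)) ∧
    F = ∑ i, G i

/-- `F` is a direct sum: `F = F₁ + F₂` with `F₁ ∈ S^d V₁`, `F₂ ∈ S^d V₂` nonzero and
`V = V₁ ⊕ V₂`. -/
def IsDirectSum (F : MvPolynomial (Fin n) ℂ) (d : ℕ) : Prop :=
  IsSFoldDirectSum F d 2

/-- `F` is a limit (as `t → 0`) of `s`-fold direct sums of degree `d`. -/
def IsLimitOfSFoldDirectSums (F : MvPolynomial (Fin n) ℂ) (d s : ℕ) : Prop :=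
  ∃ G : ℂ → MvPolynomial (Fin n) ℂ,
    (∀ t : ℂ, t ≠ 0 → IsSFoldDirectSum (G t) d s) ∧
    ∀ m : Fin n →₀ ℕ,
      Filter.Tendsto (fun t => MvPolynomial.coeff m (G t))
        (nhdsWithin (0 : ℂ) {(0 : ℂ)}ᶜ) (nhds (MvPolynomial.coeff m F))

/-- `F` is a limit of direct sums. -/
def IsLimitOfDirectSums (F : MvPolynomial (Fin n) ℂ) (d : ℕ) : Prop :=
  IsLimitOfSFoldDirectSums F d 2

/-- `F` is concise: `(F^⊥)_1 = 0`, i.e. `F` cannot be written using fewer variables. -/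
def Concise (F : MvPolynomial (Fin n) ℂ) : Prop :=
  ∀ Θ : MvPolynomial (Fin n) ℂ, Θ.IsHomogeneous 1 → contract Θ F = 0 → Θ = 0

end Apolarity

/-!
Write `ℓ = a + b` with `a ∈ V₀`, `b ∈ V₁`, and `F = G₀ + G₁` accordingly. As `V = V₀ ⊕ V₁`, a
point can be prescribed independently on `V₀`, which is all `G₀` sees, and on `V₁`, all `G₁`
sees. Fix `q` with `b(q) = -1`. For every point `p` some point agrees with `p` on `V₀` and with
`a(p) • q` on `V₁`; there `ℓ` vanishes, so `G₀(p) + a(p)^d G₁(q) = 0` by homogeneity of `G₁`.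
Hence `G₀ = c₀ a^d` and symmetrically `G₁ = c₁ b^d`, and `d`-th roots `γ₀^d = c₀`,
`γ₁^d = -c₁` give `F = (γ₀ a)^d - (γ₁ b)^d`.
-/

theorem LinearMap.exists_eqOn_of_disjoint {K M N : Type*} [Field K] [AddCommGroup M] [Module K M]
    [AddCommGroup N] [Module K N] {V₀ V₁ : Submodule K M} (h : Disjoint V₀ V₁)
    (f₀ f₁ : M →ₗ[K] N) : ∃ g : M →ₗ[K] N, Set.EqOn g f₀ V₀ ∧ Set.EqOn g f₁ V₁ := by
  let p₀ : M →ₗ.[K] N := ⟨V₀, f₀ ∘ₗ V₀.subtype⟩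
  let p₁ : M →ₗ.[K] N := ⟨V₁, f₁ ∘ₗ V₁.subtype⟩
  have hagree : ∀ (x : p₀.domain) (y : p₁.domain), (x : M) = y → p₀ x = p₁ y := by
    intro x y hxy
    have hx : (x : M) = 0 := Submodule.disjoint_def.1 h x x.2 (hxy ▸ y.2)
    simp [p₀, p₁, hx, ← hxy]
  obtain ⟨g, hg⟩ := LinearMap.exists_extend (p₀.sup p₁ hagree).toFun
  have hext : ∀ x : (p₀.sup p₁ hagree).domain, g x = p₀.sup p₁ hagree x := fun x =>
    LinearMap.congr_fun hg x
  refine ⟨g, fun v hv => ?_, fun v hv => ?_⟩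
  · exact (hext ⟨v, Submodule.mem_sup_left hv⟩).trans
      ((p₀.left_le_sup p₁ hagree).2 (x := ⟨v, hv⟩) rfl).symm
  · exact (hext ⟨v, Submodule.mem_sup_right hv⟩).trans
      ((p₀.right_le_sup p₁ hagree).2 (x := ⟨v, hv⟩) rfl).symm

theorem LinearIndependent.pair_of_disjoint {K M : Type*} [Field K] [AddCommGroup M] [Module K M]
    {V₀ V₁ : Submodule K M} (h : Disjoint V₀ V₁) {x y : M} (hx : x ∈ V₀) (hy : y ∈ V₁)
    (hx0 : x ≠ 0) (hy0 : y ≠ 0) : LinearIndependent K ![x, y] := by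
  rw [LinearIndependent.pair_iff]
  intro s t hst
  have hsx : s • x = 0 := Submodule.disjoint_def.1 h _ (V₀.smul_mem s hx)
    (by rw [eq_neg_of_add_eq_zero_left hst]; exact V₁.neg_mem (V₁.smul_mem t hy))
  have hty : t • y = 0 := by rwa [hsx, zero_add] at hst
  exact ⟨(smul_eq_zero.1 hsx).resolve_right hx0, (smul_eq_zero.1 hty).resolve_right hy0⟩

namespace MvPolynomial

theorem IsHomogeneous.eval_smul {R σ : Type*} [CommSemiring R] {p : MvPolynomial σ R} {d : ℕ}
    (hp : p.IsHomogeneous d) (t : R) (x : σ → R) : eval (t • x) p = t ^ d * eval x p := by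
  rw [eval_eq, eval_eq, Finset.mul_sum]
  refine Finset.sum_congr rfl fun m hm => ?_
  have hdeg : ∑ i ∈ m.support, m i = d := by
    rw [← hp (mem_support_iff.1 hm), Finsupp.weight_apply]; simp [Finsupp.sum]
  simp only [Pi.smul_apply, smul_eq_mul, mul_pow, Finset.prod_mul_distrib,
    Finset.prod_pow_eq_pow_sum, hdeg]
  ring

theorem IsHomogeneous.eval_comp_X {R σ : Type*} [CommSemiring R] {p : MvPolynomial σ R}
    (hp : p.IsHomogeneous 1) (g : MvPolynomial σ R →ₗ[R] R) : eval (fun i => g (X i)) p = g p := by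
  have hspan : p ∈ Submodule.span R (Set.range X) := by
    rw [← homogeneousSubmodule_one_eq_span_X]; exact hp
  have hX : Set.EqOn (MvPolynomial.aeval fun i => g (X i)).toLinearMap g (Set.range X) := by
    rintro _ ⟨i, rfl⟩
    simp
  simpa using LinearMap.eqOn_span hX hspan

theorem IsHomogeneous.degree_ne_zero_of_linear_dvd {R σ : Type*} [CommSemiring R]
    {F ℓ : MvPolynomial σ R} {d : ℕ} (hF : F.IsHomogeneous d) (hF0 : F ≠ 0)
    (hℓ : ℓ.IsHomogeneous 1) (hdvd : ℓ ∣ F) : d ≠ 0 := by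
  rintro rfl
  obtain ⟨H, rfl⟩ := hdvd
  have hℓ0 : constantCoeff ℓ = 0 := by
    rw [constantCoeff_eq]; exact hℓ.coeff_eq_zero (by simp)
  refine hF0 ((totalDegree_eq_zero_iff_eq_C.1 (Nat.le_zero.1 hF.totalDegree_le)).trans ?_)
  rw [← constantCoeff_eq, map_mul, hℓ0, zero_mul, C_0]

theorem eval_eq_eval_of_mem_adjoin {R σ : Type*} [CommSemiring R] {s : Set (MvPolynomial σ R)}
    {x y : σ → R} (h : ∀ v ∈ s, eval x v = eval y v) {G : MvPolynomial σ R}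
    (hG : G ∈ Algebra.adjoin R s) : eval x G = eval y G := by
  have hG' : aeval x G = aeval y G :=
    AlgHom.adjoin_le_equalizer (aeval x) (aeval y) (fun v hv => by simpa using h v hv) hG
  simpa using hG'

section Field

variable {K σ : Type*} [Field K] {V₀ V₁ : Submodule K (MvPolynomial σ K)}

theorem exists_eval_eq_of_disjoint (hV₀ : V₀ ≤ homogeneousSubmodule σ K 1)
    (hV₁ : V₁ ≤ homogeneousSubmodule σ K 1) (h : Disjoint V₀ V₁) (x₀ x₁ : σ → K) :
    ∃ x : σ → K, (∀ G ∈ Algebra.adjoin K (V₀ : Set _), eval x G = eval x₀ G) ∧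
      ∀ G ∈ Algebra.adjoin K (V₁ : Set _), eval x G = eval x₁ G := by
  obtain ⟨g, hg₀, hg₁⟩ :=
    LinearMap.exists_eqOn_of_disjoint h (aeval x₀).toLinearMap (aeval x₁).toLinearMap
  have hagree : ∀ {V : Submodule K (MvPolynomial σ K)} {y : σ → K}, V ≤ homogeneousSubmodule σ K 1 →
      Set.EqOn g (aeval y).toLinearMap V →
      ∀ G ∈ Algebra.adjoin K (V : Set _), eval (fun i => g (X i)) G = eval y G :=
    fun hV hgV _ => eval_eq_eval_of_mem_adjoin fun v hv =>
      (IsHomogeneous.eval_comp_X (hV hv) g).trans (hgV hv)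
  exact ⟨fun i => g (X i), hagree hV₀ hg₀, hagree hV₁ hg₁⟩

theorem exists_eq_C_mul_pow_of_add_eq_mul [Infinite K] (hV₀ : V₀ ≤ homogeneousSubmodule σ K 1)
    (hV₁ : V₁ ≤ homogeneousSubmodule σ K 1) (h : Disjoint V₀ V₁) {d : ℕ}
    {G₀ G₁ a b H : MvPolynomial σ K} (hG₀ : G₀ ∈ Algebra.adjoin K (V₀ : Set _))
    (hG₁ : G₁ ∈ Algebra.adjoin K (V₁ : Set _)) (hG₁d : G₁.IsHomogeneous d)
    (ha : a ∈ V₀) (hb : b ∈ V₁) (hb0 : b ≠ 0) (hsum : G₀ + G₁ = (a + b) * H) :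
    ∃ c : K, G₀ = C c * a ^ d := by
  have hb1 : b.IsHomogeneous 1 := hV₁ hb
  obtain ⟨y, hy⟩ : ∃ y, eval y b = -1 := by
    obtain ⟨y, hy⟩ : ∃ y, eval y b ≠ 0 := by
      by_contra! hy
      exact hb0 (funext fun y => by simpa using hy y)
    exact ⟨(-(eval y b)⁻¹) • y, by rw [hb1.eval_smul, pow_one, neg_mul, inv_mul_cancel₀ hy]⟩
  refine ⟨-eval y G₁, funext fun x => ?_⟩
  obtain ⟨z, hz₀, hz₁⟩ := exists_eval_eq_of_disjoint hV₀ hV₁ h x (eval x a • y)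
  have hza : eval z a = eval x a := hz₀ a (Algebra.subset_adjoin ha)
  have hzb : eval z b = -eval x a := by
    rw [hz₁ b (Algebra.subset_adjoin hb), hb1.eval_smul, hy]; ring
  have hzero := congrArg (eval z) hsum
  rw [map_add, map_mul, map_add, hza, hzb, add_neg_cancel, zero_mul, hz₀ G₀ hG₀, hz₁ G₁ hG₁,
    hG₁d.eval_smul] at hzero
  simp only [map_mul, map_pow, eval_C]
  linear_combination hzero

theorem exists_eq_sub_pow_of_add_eq_mul [IsAlgClosed K] (hV₀ : V₀ ≤ homogeneousSubmodule σ K 1)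
    (hV₁ : V₁ ≤ homogeneousSubmodule σ K 1) (h : Disjoint V₀ V₁) {d : ℕ}
    {G₀ G₁ ℓ H : MvPolynomial σ K} (hG₀ : G₀ ∈ Algebra.adjoin K (V₀ : Set _))
    (hG₁ : G₁ ∈ Algebra.adjoin K (V₁ : Set _)) (hG₀d : G₀.IsHomogeneous d)
    (hG₁d : G₁.IsHomogeneous d) (hG₀0 : G₀ ≠ 0) (hG₁0 : G₁ ≠ 0) (hsum0 : G₀ + G₁ ≠ 0)
    (hℓ : ℓ ∈ V₀ ⊔ V₁) (hsum : G₀ + G₁ = ℓ * H) :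
    ∃ x ∈ V₀, ∃ y ∈ V₁, x ≠ 0 ∧ y ≠ 0 ∧ G₀ + G₁ = x ^ d - y ^ d := by
  have hd : d ≠ 0 :=
    (hG₀d.add hG₁d).degree_ne_zero_of_linear_dvd hsum0 (sup_le hV₀ hV₁ hℓ) ⟨H, hsum⟩
  obtain ⟨a, ha, b, hb, rfl⟩ := Submodule.mem_sup.1 hℓ
  have hpow₀ : b ≠ 0 → ∃ c, G₀ = C c * a ^ d := fun hb0 =>
    exists_eq_C_mul_pow_of_add_eq_mul hV₀ hV₁ h hG₀ hG₁ hG₁d ha hb hb0 hsum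
  have hpow₁ : a ≠ 0 → ∃ c, G₁ = C c * b ^ d := fun ha0 =>
    exists_eq_C_mul_pow_of_add_eq_mul hV₁ hV₀ h.symm hG₁ hG₀ hG₀d hb ha ha0
      (by rw [add_comm, hsum, add_comm a])
  have hab : a ≠ 0 ∨ b ≠ 0 := by
    by_contra! hab
    exact hsum0 (by rw [hsum, hab.1, hab.2, add_zero, zero_mul])
  have ha0 : a ≠ 0 := by
    rintro rfl
    obtain ⟨c, hc⟩ := hpow₀ (hab.resolve_left (not_not.2 rfl))
    exact hG₀0 (by rw [hc, zero_pow hd, mul_zero])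
  have hb0 : b ≠ 0 := by
    rintro rfl
    obtain ⟨c, hc⟩ := hpow₁ ha0
    exact hG₁0 (by rw [hc, zero_pow hd, mul_zero])
  obtain ⟨c₀, hc₀⟩ := hpow₀ hb0
  obtain ⟨c₁, hc₁⟩ := hpow₁ ha0
  obtain ⟨γ₀, hγ₀⟩ := IsAlgClosed.exists_pow_nat_eq c₀ (Nat.pos_of_ne_zero hd)
  obtain ⟨γ₁, hγ₁⟩ := IsAlgClosed.exists_pow_nat_eq (-c₁) (Nat.pos_of_ne_zero hd)
  refine ⟨γ₀ • a, V₀.smul_mem γ₀ ha, γ₁ • b, V₁.smul_mem γ₁ hb, smul_ne_zero ?_ ha0,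
    smul_ne_zero ?_ hb0, ?_⟩
  · rintro rfl
    exact hG₀0 (by rw [hc₀, ← hγ₀, zero_pow hd, C_0, zero_mul])
  · rintro rfl
    exact hG₁0 (by rw [hc₁, ← neg_neg c₁, ← hγ₁, zero_pow hd, neg_zero, C_0, zero_mul])
  · rw [smul_pow, smul_pow, hγ₀, hγ₁, hc₀, hc₁, smul_eq_C_mul, smul_eq_C_mul, C_neg]
    ring

end Field

end MvPolynomial

theorem linear_factor_direct_sum_general
    (n d : ℕ) (F : MvPolynomial (Fin n) ℂ) (hF0 : F ≠ 0)
    (hdiv : ∃ ℓ G : MvPolynomial (Fin n) ℂ, ℓ.IsHomogeneous 1 ∧ F = ℓ * G) :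
    ¬ IsDirectSum F d ∨
    ∃ x y : MvPolynomial (Fin n) ℂ, x.IsHomogeneous 1 ∧ y.IsHomogeneous 1 ∧
      LinearIndependent ℂ ![x, y] ∧ F = x ^ d - y ^ d := by
  refine or_iff_not_imp_left.2 fun hDS => ?_
  obtain ⟨V, G, hV, hindep, hsup, hG, rfl⟩ := not_not.1 hDS
  obtain ⟨ℓ, H, hℓ, hFℓ⟩ := hdiv
  rw [Fin.sum_univ_two] at hF0 hFℓ ⊢
  have hdisj : Disjoint (V 0) (V 1) := hindep.pairwiseDisjoint zero_ne_one
  have hℓV : ℓ ∈ V 0 ⊔ V 1 := by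
    have hle : ⨆ i, V i ≤ V 0 ⊔ V 1 := iSup_le (Fin.forall_fin_two.2 ⟨le_sup_left, le_sup_right⟩)
    exact hle (hsup ▸ hℓ)
  obtain ⟨x, hx, y, hy, hx0, hy0, hxy⟩ := exists_eq_sub_pow_of_add_eq_mul (hV 0) (hV 1) hdisj
    (hG 0).2.2 (hG 1).2.2 (hG 0).2.1 (hG 1).2.1 (hG 0).1 (hG 1).1 hF0 hℓV hFℓ
  exact ⟨x, y, hV 0 hx, hV 1 hy, .pair_of_disjoint hdisj hx hy hx0 hy0, hxy⟩

/-- If a homogeneous form `F` of degree `d` over `ℂ` is divisible by a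
linear form, then either `F` is not a direct sum, or `F = x^d - y^d` for some linearly
independent linear forms `x`, `y`. -/
theorem linear_factor_direct_sum
    (n d : ℕ) (F : MvPolynomial (Fin n) ℂ) (hF : F.IsHomogeneous d) (hF0 : F ≠ 0)
    (hdiv : ∃ ℓ G : MvPolynomial (Fin n) ℂ, ℓ.IsHomogeneous 1 ∧ F = ℓ * G) :
    ¬ IsDirectSum F d ∨
    ∃ x y : MvPolynomial (Fin n) ℂ, x.IsHomogeneous 1 ∧ y.IsHomogeneous 1 ∧
      LinearIndependent ℂ ![x, y] ∧ F = x ^ d - y ^ d :=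
  linear_factor_direct_sum_general n d F hF0 hdiv
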